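/- Let p, q be probability vectors on Fin 4 with p i > 0 for all i, with entries decreasingly ordered (p 0 ≥ p 1 ≥ p 2 ≥ p 3 and q 0 ≥ q 1 ≥ q 2 ≥ q 3), and with ¬(p ≺ q). Let a be a real number with 1/2 < a < 1 and let φ be the probability vector (a, 1−a) on Fin 2. Then p ⊗ φ ≺ q ⊗ φ if and only if all of the following hold: p 0 ≤ q 0; p 0 + p 1 > q 0 + q 1; p 0 + p 1 + p 2 ≤ q 0 + q 1 + q 2; (p 0 + p 1 − q 0)/(q 1 + q 2) ≤ a; 1 − (p 3 − q 3)/(q 2 − p 2) ≤ a; a ≤ q 0/(p 0 + p 1); a ≤ (q 0 − p 0)/(p 1 − q 1); and a ≤ 1 − q 3/(p 2 + p 3). -/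

import Mathlib

open Finset

/-- max over finsets of card k of the sum of entries -/
noncomputable def maxSum {ι : Type*} [Fintype ι] (p : ι → ℝ) (k : ℕ) : ℝ :=
  sSup {x : ℝ | ∃ S : Finset ι, S.card = k ∧ x = ∑ i ∈ S, p i}

/-- majorization: equal total sums, and for each k the max k-term partial sum
of `p` is at most that of `q`. -/
def Maj {ι : Type*} [Fintype ι] (p q : ι → ℝ) : Prop :=
  (∑ i, p i = ∑ i, q i) ∧ ∀ k : ℕ, maxSum p k ≤ maxSum q k

/-- a probability vector: nonnegative entries summing to one -/
def IsProbVec {ι : Type*} [Fintype ι] (p : ι → ℝ) : Prop :=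
  (∀ i, 0 ≤ p i) ∧ ∑ i, p i = 1

/-- tensor product of two vectors -/
def tensor {ι κ : Type*} (p : ι → ℝ) (r : κ → ℝ) : ι × κ → ℝ :=
  fun x => p x.1 * r x.2

/-!
For a nonincreasing, nonnegative `p : Fin N → ℝ` and `a ≥ 1/2`, a largest `k`-element sum of
`p ⊗ (a, 1 - a)` may be taken to consist of the first `m` entries of the `a`-copy and the first
`n ≤ m` entries of the `(1 - a)`-copy. The Ky Fan sums of `p ⊗ (a, 1 - a)` are therefore the
maxima of the split sums `a P m + (1 - a) P n` over `m + n = k`, where `P` is the prefix sum of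
`p`, and `p ⊗ φ ≺ q ⊗ φ` holds iff every split sum of `p` is bounded by a split sum of `q` of the
same size.

For `N = 4`, the splits `(1, 0)` and `(4, 3)` give `P 1 ≤ Q 1` and `P 3 ≤ Q 3`, so `¬ p ≺ q`
forces `P 2 > Q 2`. Every split avoiding `P 2` is then bounded by the same split of `q`, and the
five splits `(2, 0)`, `(2, 1)`, `(2, 2)`, `(3, 2)`, `(4, 2)` produce exactly the five bounds on `a`.
-/

section MaxSum

variable {ι : Type*} [Fintype ι]

lemma sum_le_maxSum (p : ι → ℝ) (S : Finset ι) : ∑ i ∈ S, p i ≤ maxSum p S.card := by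
  refine le_csSup ?_ ⟨S, rfl, rfl⟩
  refine (((univ.powersetCard S.card).image fun T => ∑ i ∈ T, p i).bddAbove).mono ?_
  rintro x ⟨T, hT, rfl⟩
  exact mem_coe.2 (mem_image.2 ⟨T, mem_powersetCard.2 ⟨subset_univ T, hT⟩, rfl⟩)

lemma exists_sum_eq_maxSum (p : ι → ℝ) {k : ℕ} (hk : k ≤ Fintype.card ι) :
    ∃ S : Finset ι, S.card = k ∧ ∑ i ∈ S, p i = maxSum p k := by
  obtain ⟨S, hS, hmax⟩ := (univ.powersetCard k).exists_max_image (fun T => ∑ i ∈ T, p i)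
    (powersetCard_nonempty.2 (by rwa [card_univ]))
  rw [mem_powersetCard] at hS
  have hgreatest : IsGreatest {x : ℝ | ∃ T : Finset ι, T.card = k ∧ x = ∑ i ∈ T, p i}
      (∑ i ∈ S, p i) := by
    refine ⟨⟨S, hS.2, rfl⟩, ?_⟩
    rintro x ⟨T, hT, rfl⟩
    exact hmax T (mem_powersetCard.2 ⟨subset_univ T, hT⟩)
  exact ⟨S, hS.2, hgreatest.csSup_eq.symm⟩

lemma maxSum_le {p : ι → ℝ} {k : ℕ} {M : ℝ} (hk : k ≤ Fintype.card ι)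
    (h : ∀ S : Finset ι, S.card = k → ∑ i ∈ S, p i ≤ M) : maxSum p k ≤ M := by
  obtain ⟨S, hS, hmax⟩ := exists_sum_eq_maxSum p hk
  exact hmax ▸ h S hS

lemma maxSum_of_card_lt (p : ι → ℝ) {k : ℕ} (hk : Fintype.card ι < k) : maxSum p k = 0 := by
  have : {x : ℝ | ∃ S : Finset ι, S.card = k ∧ x = ∑ i ∈ S, p i} = ∅ := by
    refine Set.eq_empty_of_forall_notMem ?_
    rintro x ⟨S, rfl, -⟩
    exact (S.card_le_univ.trans_lt hk).false
  rw [maxSum, this, Real.sSup_empty]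

end MaxSum

section Tensor

variable {ι κ : Type*} [Fintype ι] [Fintype κ]

lemma sum_tensor_univ (p : ι → ℝ) (r : κ → ℝ) :
    ∑ x, tensor p r x = (∑ i, p i) * ∑ j, r j := by
  rw [Fintype.sum_mul_sum, Fintype.sum_prod_type]
  rfl

lemma sum_tensor [DecidableEq ι] [DecidableEq κ] (p : ι → ℝ) (r : κ → ℝ) (S : Finset (ι × κ)) :
    ∑ x ∈ S, tensor p r x = ∑ j, r j * ∑ i ∈ univ.filter (fun i => (i, j) ∈ S), p i := by
  rw [← univ_inter S, ← sum_ite_mem, Fintype.sum_prod_type_right]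
  simp only [Finset.mul_sum, Finset.sum_filter, tensor, mul_ite, mul_zero, mul_comm, univ_inter]

lemma card_eq_sum_card_filter [DecidableEq ι] [DecidableEq κ] (S : Finset (ι × κ)) :
    S.card = ∑ j, (univ.filter (fun i => (i, j) ∈ S)).card := by
  have := sum_tensor (fun _ => (1 : ℝ)) (fun _ => 1) S
  simp only [tensor, mul_one, one_mul, sum_const, nsmul_eq_mul] at this
  exact_mod_cast this

end Tensor

section PrefixSum

variable {N : ℕ}

def prefixSum (p : Fin N → ℝ) (m : ℕ) : ℝ :=
  ∑ i ∈ univ.filter (fun i : Fin N => (i : ℕ) < m), p i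

lemma card_filter_val_lt_of_le {m : ℕ} (hm : m ≤ N) :
    (univ.filter (fun i : Fin N => (i : ℕ) < m)).card = m := by
  rw [Fin.card_filter_val_lt, min_eq_right hm]

@[simp]
lemma prefixSum_zero (p : Fin N → ℝ) : prefixSum p 0 = 0 := by
  simp [prefixSum]

lemma prefixSum_succ (p : Fin N → ℝ) {m : ℕ} (hm : m < N) :
    prefixSum p (m + 1) = prefixSum p m + p ⟨m, hm⟩ := by
  have : univ.filter (fun i : Fin N => (i : ℕ) < m + 1)
      = insert ⟨m, hm⟩ (univ.filter fun i : Fin N => (i : ℕ) < m) := by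
    ext i; simp [Fin.ext_iff, le_iff_eq_or_lt]
  rw [prefixSum, this, sum_insert (by simp), add_comm]
  rfl

lemma prefixSum_mono {p : Fin N → ℝ} (hp : 0 ≤ p) : Monotone (prefixSum p) :=
  fun _ _ hmn => sum_le_sum_of_subset_of_nonneg
    (monotone_filter_right _ fun _ _ h => lt_of_lt_of_le h hmn) fun i _ _ => hp i

lemma prefixSum_le_maxSum (p : Fin N → ℝ) {m : ℕ} (hm : m ≤ N) :
    prefixSum p m ≤ maxSum p m := by
  simpa only [card_filter_val_lt_of_le hm, prefixSum] using
    sum_le_maxSum p (univ.filter fun i : Fin N => (i : ℕ) < m)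

lemma sum_le_prefixSum {p : Fin N → ℝ} (hp : Antitone p) (S : Finset (Fin N)) :
    ∑ i ∈ S, p i ≤ prefixSum p S.card := by
  induction S using Finset.induction_on_max with
  | empty => simp
  | insert x S hlt ih =>
    have hcard : S.card ≤ x := by
      simpa using card_le_card (fun y hy => mem_Iio.2 (hlt y hy) : S ⊆ Iio x)
    have hx : x ∉ S := fun hx => lt_irrefl x (hlt x hx)
    rw [sum_insert hx, card_insert_of_notMem hx, prefixSum_succ p (hcard.trans_lt x.isLt), add_comm]
    exact add_le_add ih (hp (Fin.mk_le_of_le_val hcard))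

lemma maj_of_prefixSum_le {p q : Fin N → ℝ} (hp : Antitone p)
    (hsum : ∑ i, p i = ∑ i, q i) (h : ∀ m ≤ N, prefixSum p m ≤ prefixSum q m) : Maj p q := by
  refine ⟨hsum, fun m => ?_⟩
  rcases le_or_gt m N with hm | hm
  · refine maxSum_le (by simpa using hm) fun S hS => ?_
    calc ∑ i ∈ S, p i ≤ prefixSum p m := hS ▸ sum_le_prefixSum hp S
      _ ≤ prefixSum q m := h m hm
      _ ≤ maxSum q m := prefixSum_le_maxSum q hm
  · rw [maxSum_of_card_lt p (by simpa using hm), maxSum_of_card_lt q (by simpa using hm)]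

end PrefixSum

section SplitSum

variable {N : ℕ}

def splitSum (p : Fin N → ℝ) (a : ℝ) (m n : ℕ) : ℝ :=
  a * prefixSum p m + (1 - a) * prefixSum p n

lemma splitSum_swap_le {p : Fin N → ℝ} (hp : 0 ≤ p) {a : ℝ} (ha : 1 / 2 ≤ a) {m n : ℕ}
    (h : n ≤ m) : splitSum p a n m ≤ splitSum p a m n := by
  have := mul_nonneg (by linarith : 0 ≤ 2 * a - 1) (sub_nonneg.2 (prefixSum_mono hp h))
  unfold splitSum
  linarith

lemma splitSum_le_maxSum_tensor (p : Fin N → ℝ) (a : ℝ) {m n : ℕ} (hm : m ≤ N) (hn : n ≤ N) :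
    splitSum p a m n ≤ maxSum (tensor p ![a, 1 - a]) (m + n) := by
  let T : ℕ → Finset (Fin N) := fun m => univ.filter fun i => (i : ℕ) < m
  have hdisj : Disjoint (T m ×ˢ {(0 : Fin 2)}) (T n ×ˢ {1}) := by
    simp [disjoint_left]
  have hcard : (T m ×ˢ {(0 : Fin 2)} ∪ T n ×ˢ {1}).card = m + n := by
    rw [card_union_of_disjoint hdisj, card_product, card_product, card_filter_val_lt_of_le hm,
      card_filter_val_lt_of_le hn, card_singleton, card_singleton, mul_one, mul_one]
  have := sum_le_maxSum (tensor p ![a, 1 - a]) (T m ×ˢ {(0 : Fin 2)} ∪ T n ×ˢ {1})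
  rw [hcard, sum_union hdisj, sum_product, sum_product] at this
  simpa [splitSum, prefixSum, tensor, mul_sum, mul_comm] using this

lemma exists_splitSum_ge {p : Fin N → ℝ} (hp : Antitone p) (hp0 : 0 ≤ p) {a : ℝ}
    (ha : 1 / 2 ≤ a) (ha1 : a ≤ 1) (S : Finset (Fin N × Fin 2)) :
    ∃ m n, m + n = S.card ∧ n ≤ m ∧ m ≤ N ∧
      ∑ x ∈ S, tensor p ![a, 1 - a] x ≤ splitSum p a m n := by
  set S₀ := univ.filter fun i => (i, (0 : Fin 2)) ∈ S
  set S₁ := univ.filter fun i => (i, (1 : Fin 2)) ∈ S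
  have hcard : S.card = S₀.card + S₁.card := by
    simpa only [Fin.sum_univ_two] using card_eq_sum_card_filter S
  have hle : ∑ x ∈ S, tensor p ![a, 1 - a] x ≤ splitSum p a S₀.card S₁.card := by
    rw [sum_tensor, Fin.sum_univ_two]
    exact add_le_add (mul_le_mul_of_nonneg_left (sum_le_prefixSum hp S₀) (by simp; linarith))
      (mul_le_mul_of_nonneg_left (sum_le_prefixSum hp S₁) (by simp; linarith))
  have hN : ∀ T : Finset (Fin N), T.card ≤ N := fun T => by simpa using card_le_univ T
  rcases le_total S₁.card S₀.card with h | h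
  · exact ⟨_, _, hcard.symm, h, hN S₀, hle⟩
  · exact ⟨_, _, by omega, h, hN S₁, hle.trans (splitSum_swap_le hp0 ha h)⟩

def SplitsDominated (p q : Fin N → ℝ) (a : ℝ) : Prop :=
  ∀ m n, n ≤ m → m ≤ N → ∃ m' n', m' + n' = m + n ∧ n' ≤ m' ∧ m' ≤ N ∧
    splitSum p a m n ≤ splitSum q a m' n'

theorem maj_tensor_iff {p q : Fin N → ℝ} (hp : Antitone p) (hp0 : 0 ≤ p) (hq : Antitone q)
    (hq0 : 0 ≤ q) {a : ℝ} (ha : 1 / 2 ≤ a) (ha1 : a ≤ 1) :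
    Maj (tensor p ![a, 1 - a]) (tensor q ![a, 1 - a]) ↔
      (∑ i, p i = ∑ i, q i) ∧ SplitsDominated p q a := by
  have hcard : Fintype.card (Fin N × Fin 2) = N + N := by simp [mul_two]
  simp only [Maj, sum_tensor_univ, Fin.sum_univ_two, Matrix.cons_val_zero, Matrix.cons_val_one,
    Matrix.cons_val_fin_one, add_sub_cancel, mul_one]
  refine and_congr_right fun _ => ⟨fun h m n hnm hm => ?_, fun h k => ?_⟩
  · obtain ⟨S, hS, hmax⟩ := exists_sum_eq_maxSum (tensor q ![a, 1 - a]) (k := m + n)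
      (hcard ▸ by omega)
    obtain ⟨m', n', hk, hnm', hm', hle⟩ := exists_splitSum_ge hq hq0 ha ha1 S
    refine ⟨m', n', hk.trans hS, hnm', hm', ?_⟩
    calc splitSum p a m n ≤ maxSum (tensor p ![a, 1 - a]) (m + n) :=
          splitSum_le_maxSum_tensor p a hm (hnm.trans hm)
      _ ≤ maxSum (tensor q ![a, 1 - a]) (m + n) := h (m + n)
      _ = ∑ x ∈ S, tensor q ![a, 1 - a] x := hmax.symm
      _ ≤ splitSum q a m' n' := hle
  · rcases le_or_gt k (N + N) with hk | hk
    · refine maxSum_le (hcard ▸ hk) fun S hS => ?_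
      obtain ⟨m, n, hmn, hnm, hm, hle⟩ := exists_splitSum_ge hp hp0 ha ha1 S
      obtain ⟨m', n', hmn', hnm', hm', hle'⟩ := h m n hnm hm
      calc ∑ x ∈ S, tensor p ![a, 1 - a] x ≤ splitSum p a m n := hle
        _ ≤ splitSum q a m' n' := hle'
        _ ≤ maxSum (tensor q ![a, 1 - a]) (m' + n') :=
          splitSum_le_maxSum_tensor q a hm' (hnm'.trans hm')
        _ = maxSum (tensor q ![a, 1 - a]) k := by rw [hmn', hmn, hS]
    · rw [maxSum_of_card_lt _ (hcard ▸ hk), maxSum_of_card_lt _ (hcard ▸ hk)]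

end SplitSum

section FinFour

lemma prefixSum_fin_four (p : Fin 4 → ℝ) :
    prefixSum p 0 = 0 ∧ prefixSum p 1 = p 0 ∧ prefixSum p 2 = p 0 + p 1 ∧
      prefixSum p 3 = p 0 + p 1 + p 2 ∧ prefixSum p 4 = p 0 + p 1 + p 2 + p 3 := by
  simp [prefixSum_succ]

variable {p q : Fin 4 → ℝ} {a : ℝ}

lemma antitone_fin_four (h : p 1 ≤ p 0 ∧ p 2 ≤ p 1 ∧ p 3 ≤ p 2) : Antitone p := by
  refine Fin.antitone_iff_succ_le.2 fun i => ?_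
  fin_cases i
  exacts [h.1, h.2.1, h.2.2]

def CatalystBounds (p q : Fin 4 → ℝ) (a : ℝ) : Prop :=
  p 0 + p 1 - q 0 ≤ a * (q 1 + q 2) ∧ (1 - a) * (q 2 - p 2) ≤ p 3 - q 3 ∧
    a * (p 0 + p 1) ≤ q 0 ∧ a * (p 1 - q 1) ≤ q 0 - p 0 ∧ q 3 ≤ (1 - a) * (p 2 + p 3)

lemma catalystBounds_iff (hp : ∀ i, 0 < p i) (hq : ∀ i, 0 ≤ q i) (c1 : p 0 ≤ q 0)
    (c2 : q 0 + q 1 < p 0 + p 1) (c3 : p 0 + p 1 + p 2 ≤ q 0 + q 1 + q 2) :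
    ((p 0 + p 1 - q 0) / (q 1 + q 2) ≤ a ∧ 1 - (p 3 - q 3) / (q 2 - p 2) ≤ a ∧
      a ≤ q 0 / (p 0 + p 1) ∧ a ≤ (q 0 - p 0) / (p 1 - q 1) ∧ a ≤ 1 - q 3 / (p 2 + p 3)) ↔
      CatalystBounds p q a := by
  have := hp 0; have := hp 2; have := hp 3; have := hq 1
  refine and_congr (div_le_iff₀ (by linarith)) <| and_congr ?_ <|
    and_congr (le_div_iff₀ (by linarith)) <| and_congr (le_div_iff₀ (by linarith)) ?_
  · rw [sub_le_comm, le_div_iff₀ (by linarith)]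
  · rw [le_sub_comm, div_le_iff₀ (by linarith)]

lemma prefixSum_le_of_ne_two (c1 : p 0 ≤ q 0) (c3 : p 0 + p 1 + p 2 ≤ q 0 + q 1 + q 2)
    (hsum : p 0 + p 1 + p 2 + p 3 = q 0 + q 1 + q 2 + q 3) {m : ℕ} (hm : m ≤ 4) (h2 : m ≠ 2) :
    prefixSum p m ≤ prefixSum q m := by
  obtain rfl | rfl | rfl | rfl : m = 0 ∨ m = 1 ∨ m = 3 ∨ m = 4 := by omega
  all_goals simp only [prefixSum_fin_four]; linarith

namespace SplitsDominated

lemma apply_zero_le (h : SplitsDominated p q a) (ha : 0 < a) : p 0 ≤ q 0 := by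
  obtain ⟨m', n', hk, hnm, -, hle⟩ := h 1 0 zero_le_one (by norm_num)
  obtain ⟨rfl, rfl⟩ : m' = 1 ∧ n' = 0 := by omega
  simp only [splitSum, prefixSum_fin_four, mul_zero, add_zero] at hle
  exact le_of_mul_le_mul_left hle ha

lemma sum_three_le (h : SplitsDominated p q a) (ha : a < 1)
    (hsum : p 0 + p 1 + p 2 + p 3 = q 0 + q 1 + q 2 + q 3) :
    p 0 + p 1 + p 2 ≤ q 0 + q 1 + q 2 := by
  obtain ⟨m', n', hk, hnm, hm', hle⟩ := h 4 3 (by norm_num) le_rfl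
  obtain ⟨rfl, rfl⟩ : m' = 4 ∧ n' = 3 := by omega
  simp only [splitSum, prefixSum_fin_four] at hle
  rw [hsum] at hle
  refine le_of_mul_le_mul_left ?_ (sub_pos.2 ha)
  linarith

lemma mul_sum_two_le (h : SplitsDominated p q a) (ha : 0 < a) (c2 : q 0 + q 1 < p 0 + p 1) :
    a * (p 0 + p 1) ≤ q 0 := by
  obtain ⟨m', n', hk, hnm, -, hle⟩ := h 2 0 zero_le_two (by norm_num)
  obtain ⟨rfl, rfl⟩ | ⟨rfl, rfl⟩ : m' = 2 ∧ n' = 0 ∨ m' = 1 ∧ n' = 1 := by omega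
  all_goals simp only [splitSum, prefixSum_fin_four] at hle
  · linarith [mul_lt_mul_of_pos_left c2 ha]
  · linarith

lemma le_mul_sum_two_three (h : SplitsDominated p q a) (ha : a < 1)
    (hsum : p 0 + p 1 + p 2 + p 3 = q 0 + q 1 + q 2 + q 3) (c2 : q 0 + q 1 < p 0 + p 1) :
    q 3 ≤ (1 - a) * (p 2 + p 3) := by
  obtain ⟨m', n', hk, hnm, hm', hle⟩ := h 4 2 (by norm_num) le_rfl
  obtain ⟨rfl, rfl⟩ | ⟨rfl, rfl⟩ : m' = 4 ∧ n' = 2 ∨ m' = 3 ∧ n' = 3 := by omega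
  all_goals simp only [splitSum, prefixSum_fin_four] at hle
  · rw [hsum] at hle
    linarith [mul_lt_mul_of_pos_left c2 (sub_pos.2 ha)]
  · linarith

lemma mul_sub_one_le (h : SplitsDominated p q a) (ha : 0 < a) (hq₂₁ : q 2 ≤ q 1)
    (c2 : q 0 + q 1 < p 0 + p 1) (c6 : a * (p 0 + p 1) ≤ q 0) :
    a * (p 1 - q 1) ≤ q 0 - p 0 := by
  obtain ⟨m', n', hk, hnm, -, hle⟩ := h 2 1 one_le_two (by norm_num)
  obtain ⟨rfl, rfl⟩ | ⟨rfl, rfl⟩ : m' = 3 ∧ n' = 0 ∨ m' = 2 ∧ n' = 1 := by omega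
  all_goals simp only [splitSum, prefixSum_fin_four] at hle
  · linarith [mul_le_mul_of_nonneg_left hq₂₁ ha.le, mul_lt_mul_of_pos_left c2 ha]
  · linarith

lemma sum_two_sub_le (h : SplitsDominated p q a) (ha₁ : 1 / 2 < a) (ha₂ : a < 1)
    (hq : q 0 + q 1 + q 2 + q 3 = 1)
    (c2 : q 0 + q 1 < p 0 + p 1) (c6 : a * (p 0 + p 1) ≤ q 0)
    (hQ3 : a + (1 - a) * (p 0 + p 1) ≤ q 0 + q 1 + q 2) :
    p 0 + p 1 - q 0 ≤ a * (q 1 + q 2) := by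
  obtain ⟨m', n', hk, hnm, -, hle⟩ := h 2 2 le_rfl (by norm_num)
  obtain ⟨rfl, rfl⟩ | ⟨rfl, rfl⟩ | ⟨rfl, rfl⟩ :
      m' = 4 ∧ n' = 0 ∨ m' = 3 ∧ n' = 1 ∨ m' = 2 ∧ n' = 2 := by omega
  all_goals simp only [splitSum, prefixSum_fin_four] at hle
  · -- Here `p 0 + p 1 ≤ a`. Failure of the bound would give `(p 0 + p 1) (1 - 2a + 2a²) > a²`,
    -- impossible because `(2a - 1) (1 - a) > 0`.
    rw [hq, mul_one] at hle
    have hgap : 0 < a * ((1 - a) * (2 * a - 1)) :=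
      mul_pos (by linarith) (mul_pos (by linarith) (by linarith))
    linarith [mul_le_mul_of_nonneg_left hQ3 (by linarith : 0 ≤ a),
      mul_le_mul_of_nonneg_left c6 (by linarith : 0 ≤ 1 - a),
      mul_nonneg (by linarith : 0 ≤ a - (p 0 + p 1)) (by nlinarith : 0 ≤ 1 - 2 * a + 2 * a ^ 2)]
  · linarith
  · linarith

lemma mul_sub_two_le (h : SplitsDominated p q a) (ha : a < 1) (hq₂₁ : q 2 ≤ q 1)
    (hsum : p 0 + p 1 + p 2 + p 3 = q 0 + q 1 + q 2 + q 3) (hq : q 0 + q 1 + q 2 + q 3 = 1)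
    (c2 : q 0 + q 1 < p 0 + p 1) (hQ3 : a + (1 - a) * (p 0 + p 1) ≤ q 0 + q 1 + q 2) :
    (1 - a) * (q 2 - p 2) ≤ p 3 - q 3 := by
  obtain ⟨m', n', hk, hnm, hm', hle⟩ := h 3 2 (by norm_num) (by norm_num)
  obtain ⟨rfl, rfl⟩ | ⟨rfl, rfl⟩ : m' = 4 ∧ n' = 1 ∨ m' = 3 ∧ n' = 2 := by omega
  all_goals simp only [splitSum, prefixSum_fin_four] at hle
  · rw [hq, mul_one] at hle
    linarith [mul_le_mul_of_nonneg_left hq₂₁ (sub_pos.2 ha).le,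
      mul_lt_mul_of_pos_left c2 (sub_pos.2 ha)]
  · linarith

lemma catalystBounds (h : SplitsDominated p q a) (ha₁ : 1 / 2 < a) (ha₂ : a < 1)
    (hq₂₁ : q 2 ≤ q 1) (hsum : p 0 + p 1 + p 2 + p 3 = q 0 + q 1 + q 2 + q 3)
    (hq : q 0 + q 1 + q 2 + q 3 = 1) (c2 : q 0 + q 1 < p 0 + p 1) : CatalystBounds p q a := by
  have c6 := h.mul_sum_two_le (by linarith) c2
  have c8 := h.le_mul_sum_two_three ha₂ hsum c2
  have hQ3 : a + (1 - a) * (p 0 + p 1) ≤ q 0 + q 1 + q 2 := by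
    rw [show p 2 + p 3 = 1 - (p 0 + p 1) by linarith] at c8
    linarith
  exact ⟨h.sum_two_sub_le ha₁ ha₂ hq c2 c6 hQ3, h.mul_sub_two_le ha₂ hq₂₁ hsum hq c2 hQ3, c6,
    h.mul_sub_one_le (by linarith) hq₂₁ c2 c6, c8⟩

end SplitsDominated

lemma splitsDominated_of_catalystBounds (c1 : p 0 ≤ q 0) (c3 : p 0 + p 1 + p 2 ≤ q 0 + q 1 + q 2)
    (hsum : p 0 + p 1 + p 2 + p 3 = q 0 + q 1 + q 2 + q 3) (ha₀ : 0 ≤ a) (ha₁ : a ≤ 1)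
    (hb : CatalystBounds p q a) : SplitsDominated p q a := by
  obtain ⟨c4, c5, c6, c7, c8⟩ := hb
  intro m n hnm hm
  by_cases h2 : m ≠ 2 ∧ n ≠ 2
  · refine ⟨m, n, rfl, hnm, hm, add_le_add ?_ ?_⟩
    · exact mul_le_mul_of_nonneg_left (prefixSum_le_of_ne_two c1 c3 hsum hm h2.1) ha₀
    · exact mul_le_mul_of_nonneg_left (prefixSum_le_of_ne_two c1 c3 hsum (hnm.trans hm) h2.2)
        (sub_nonneg.2 ha₁)
  obtain ⟨rfl, rfl⟩ | ⟨rfl, rfl⟩ | ⟨rfl, rfl⟩ | ⟨rfl, rfl⟩ | ⟨rfl, rfl⟩ :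
      m = 2 ∧ n = 0 ∨ m = 2 ∧ n = 1 ∨ m = 2 ∧ n = 2 ∨ m = 3 ∧ n = 2 ∨ m = 4 ∧ n = 2 := by omega
  · refine ⟨1, 1, rfl, le_rfl, by norm_num, ?_⟩
    simp only [splitSum, prefixSum_fin_four]
    linarith
  · refine ⟨2, 1, rfl, one_le_two, by norm_num, ?_⟩
    simp only [splitSum, prefixSum_fin_four]
    linarith
  · refine ⟨3, 1, rfl, by norm_num, by norm_num, ?_⟩
    simp only [splitSum, prefixSum_fin_four]
    linarith
  · refine ⟨3, 2, rfl, by norm_num, by norm_num, ?_⟩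
    simp only [splitSum, prefixSum_fin_four]
    linarith
  · refine ⟨3, 3, rfl, le_rfl, by norm_num, ?_⟩
    simp only [splitSum, prefixSum_fin_four]
    linarith

end FinFour

/-- Characterization of the two-level catalysts `(a, 1-a)` for a conversion
between four-dimensional diagonal distributions. -/
theorem two_level_catalyst_characterization
    (p q : Fin 4 → ℝ) (hp : IsProbVec p) (hq : IsProbVec q)
    (hppos : ∀ i, 0 < p i)
    (hpdec : p 1 ≤ p 0 ∧ p 2 ≤ p 1 ∧ p 3 ≤ p 2)
    (hqdec : q 1 ≤ q 0 ∧ q 2 ≤ q 1 ∧ q 3 ≤ q 2)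
    (hnmaj : ¬ Maj p q)
    (a : ℝ) (ha₁ : 1 / 2 < a) (ha₂ : a < 1) :
    Maj (tensor p ![a, 1 - a]) (tensor q ![a, 1 - a]) ↔
      (p 0 ≤ q 0 ∧
       q 0 + q 1 < p 0 + p 1 ∧
       p 0 + p 1 + p 2 ≤ q 0 + q 1 + q 2 ∧
       (p 0 + p 1 - q 0) / (q 1 + q 2) ≤ a ∧
       1 - (p 3 - q 3) / (q 2 - p 2) ≤ a ∧
       a ≤ q 0 / (p 0 + p 1) ∧
       a ≤ (q 0 - p 0) / (p 1 - q 1) ∧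
       a ≤ 1 - q 3 / (p 2 + p 3)) := by
  have hpa := antitone_fin_four hpdec
  have hsum : ∑ i, p i = ∑ i, q i := hp.2.trans hq.2.symm
  have hsum₄ : p 0 + p 1 + p 2 + p 3 = q 0 + q 1 + q 2 + q 3 := by
    simpa only [Fin.sum_univ_four] using hsum
  have hq₄ : q 0 + q 1 + q 2 + q 3 = 1 := by simpa only [Fin.sum_univ_four] using hq.2
  rw [maj_tensor_iff hpa hp.1 (antitone_fin_four hqdec) hq.1 ha₁.le ha₂.le, and_iff_right hsum]
  constructor
  · intro h
    have c1 := h.apply_zero_le (by linarith)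
    have c3 := h.sum_three_le ha₂ hsum₄
    have c2 : q 0 + q 1 < p 0 + p 1 := by
      by_contra! h2
      refine hnmaj (maj_of_prefixSum_le hpa hsum fun m hm => ?_)
      rcases eq_or_ne m 2 with rfl | hm2
      · simpa only [prefixSum_fin_four] using h2
      · exact prefixSum_le_of_ne_two c1 c3 hsum₄ hm hm2
    exact ⟨c1, c2, c3, (catalystBounds_iff hppos hq.1 c1 c2 c3).2
      (h.catalystBounds ha₁ ha₂ hqdec.2.1 hsum₄ hq₄ c2)⟩
  · rintro ⟨c1, c2, c3, hb⟩
    exact splitsDominated_of_catalystBounds c1 c3 hsum₄ (by linarith) ha₂.le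
      ((catalystBounds_iff hppos hq.1 c1 c2 c3).1 hb)
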